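/- Let P be a probability distribution on a finite product space and let Q = P_X ⊗ P_Y be the product of its marginals. Then Q minimizes D(P ‖ ·) over all product distributions: for any distributions R on 𝕏 and S on 𝕐, D(P ‖ R ⊗ S) ≥ D(P ‖ P_X ⊗ P_Y), i.e., the product of marginals is the information projection of P onto the class of independent distributions. -/

import Mathlib

open Finset

/-- KL divergence between distributions on a finite type, valued in `EReal` with the
convention that it is `⊤` when `P` is not absolutely continuous with respect to `Q`. -/
noncomputable def KLe {V : Type*} [Fintype V] (P Q : V → ℝ) : EReal :=
  if ∀ v, Q v = 0 → P v = 0 then ((∑ v, P v * Real.log (P v / Q v) : ℝ) : EReal) else ⊤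

/-- Gibbs-type bound: `∑ p log (q / p) ≤ ∑ (q - p)` termwise packaged. -/
lemma gibbs_aux {V : Type*} [Fintype V] (p q : V → ℝ) (hp : ∀ v, 0 ≤ p v)
    (hq : ∀ v, 0 ≤ q v) (hac : ∀ v, p v ≠ 0 → q v ≠ 0) :
    ∑ v, p v * Real.log (q v / p v) ≤ ∑ v, (q v - p v) := by
  apply Finset.sum_le_sum
  intro v _
  rcases eq_or_lt_of_le (hp v) with h0 | hpv
  · simp [← h0, hq v]
  · have hqv : 0 < q v := lt_of_le_of_ne (hq v) ((hac v (ne_of_gt hpv)).symm)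
    have hdiv : 0 < q v / p v := div_pos hqv hpv
    have hlog : Real.log (q v / p v) ≤ q v / p v - 1 :=
      Real.log_le_sub_one_of_pos hdiv
    have := mul_le_mul_of_nonneg_left hlog (le_of_lt hpv)
    calc p v * Real.log (q v / p v) ≤ p v * (q v / p v - 1) := this
      _ = q v - p v := by field_simp

/-- the product of the marginals of `P` minimizes `D(P ‖ ·)` over all
product distributions `R ⊗ S`, i.e. it is the information projection of `P` onto the
class of independent distributions. -/
theorem prod_marginals_is_information_projection {𝕏 𝕐 : Type*} [Fintype 𝕏] [Fintype 𝕐]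
    (P : 𝕏 × 𝕐 → ℝ) (hPpos : ∀ z, 0 ≤ P z) (hPsum : ∑ z, P z = 1)
    (R : 𝕏 → ℝ) (S : 𝕐 → ℝ)
    (hRpos : ∀ x, 0 ≤ R x) (hRsum : ∑ x, R x = 1)
    (hSpos : ∀ y, 0 ≤ S y) (hSsum : ∑ y, S y = 1) :
    KLe P (fun z => (∑ y', P (z.1, y')) * (∑ x', P (x', z.2))) ≤
      KLe P (fun z => R z.1 * S z.2) := by
  classical
  set PX : 𝕏 → ℝ := fun x => ∑ y', P (x, y') with hPXdef
  set PY : 𝕐 → ℝ := fun y => ∑ x', P (x', y) with hPYdef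
  have hPXpos : ∀ x, 0 ≤ PX x := fun x => Finset.sum_nonneg fun _ _ => hPpos _
  have hPYpos : ∀ y, 0 ≤ PY y := fun y => Finset.sum_nonneg fun _ _ => hPpos _
  have hPleX : ∀ x y, P (x, y) ≤ PX x := fun x y =>
    Finset.single_le_sum (fun i _ => hPpos (x, i)) (Finset.mem_univ y)
  have hPleY : ∀ x y, P (x, y) ≤ PY y := fun x y =>
    Finset.single_le_sum (fun i _ => hPpos (i, y)) (Finset.mem_univ x)
  have hPXsum : ∑ x, PX x = 1 := by
    rw [hPXdef, ← Fintype.sum_prod_type]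
    simpa using hPsum
  have hPYsum : ∑ y, PY y = 1 := by
    rw [hPYdef, ← Fintype.sum_prod_type_right]
    simpa using hPsum
  have hac0 : ∀ z : 𝕏 × 𝕐, PX z.1 * PY z.2 = 0 → P z = 0 := by
    intro z hz
    rcases mul_eq_zero.mp hz with h | h
    · exact le_antisymm (h ▸ hPleX z.1 z.2) (hPpos z)
    · exact le_antisymm (h ▸ hPleY z.1 z.2) (hPpos z)
  unfold KLe
  split_ifs with h1 h2
  · -- both absolutely continuous: the real inequality
    rw [EReal.coe_le_coe_iff]
    -- pointwise difference identity
    have key : ∀ z : 𝕏 × 𝕐,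
        P z * Real.log (P z / (PX z.1 * PY z.2)) - P z * Real.log (P z / (R z.1 * S z.2))
          = P z * Real.log (R z.1 / PX z.1) + P z * Real.log (S z.2 / PY z.2) := by
      intro z
      rcases eq_or_lt_of_le (hPpos z) with h0 | hPz
      · simp [← h0]
      · have hRS : R z.1 * S z.2 ≠ 0 := fun h => absurd (h2 z h) (ne_of_gt hPz)
        have hR : R z.1 ≠ 0 := left_ne_zero_of_mul hRS
        have hS : S z.2 ≠ 0 := right_ne_zero_of_mul hRS
        have hPX : PX z.1 ≠ 0 := ne_of_gt (lt_of_lt_of_le hPz (hPleX z.1 z.2))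
        have hPY : PY z.2 ≠ 0 := ne_of_gt (lt_of_lt_of_le hPz (hPleY z.1 z.2))
        rw [Real.log_div (ne_of_gt hPz) (mul_ne_zero hPX hPY),
          Real.log_div (ne_of_gt hPz) hRS, Real.log_mul hPX hPY, Real.log_mul hR hS,
          Real.log_div hR hPX, Real.log_div hS hPY]
        ring
    have hsplit :
        ∑ z : 𝕏 × 𝕐, (P z * Real.log (P z / (PX z.1 * PY z.2))
            - P z * Real.log (P z / (R z.1 * S z.2)))
          = (∑ x, PX x * Real.log (R x / PX x)) + ∑ y, PY y * Real.log (S y / PY y) := by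
      calc ∑ z : 𝕏 × 𝕐, (P z * Real.log (P z / (PX z.1 * PY z.2))
            - P z * Real.log (P z / (R z.1 * S z.2)))
          = ∑ z : 𝕏 × 𝕐, (P z * Real.log (R z.1 / PX z.1)
              + P z * Real.log (S z.2 / PY z.2)) := by
            exact Finset.sum_congr rfl fun z _ => key z
        _ = (∑ z : 𝕏 × 𝕐, P z * Real.log (R z.1 / PX z.1))
              + ∑ z : 𝕏 × 𝕐, P z * Real.log (S z.2 / PY z.2) := Finset.sum_add_distrib
        _ = (∑ x, PX x * Real.log (R x / PX x)) + ∑ y, PY y * Real.log (S y / PY y) := by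
            congr 1
            · rw [Fintype.sum_prod_type]
              exact Finset.sum_congr rfl fun x _ => by simp [← Finset.sum_mul]; exact Or.inl rfl
            · rw [Fintype.sum_prod_type_right]
              exact Finset.sum_congr rfl fun y _ => by simp [← Finset.sum_mul]; exact Or.inl rfl
    have hRX : ∀ x, PX x ≠ 0 → R x ≠ 0 := by
      intro x hx hR
      obtain ⟨y, _, hy⟩ := Finset.exists_ne_zero_of_sum_ne_zero hx
      exact hy (h2 (x, y) (by simp [hR]))
    have hSY : ∀ y, PY y ≠ 0 → S y ≠ 0 := by
      intro y hy hS
      obtain ⟨x, _, hx⟩ := Finset.exists_ne_zero_of_sum_ne_zero hy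
      exact hx (h2 (x, y) (by simp [hS]))
    have b1 : ∑ x, PX x * Real.log (R x / PX x) ≤ 0 := by
      have := gibbs_aux PX R hPXpos hRpos hRX
      simpa [Finset.sum_sub_distrib, hRsum, hPXsum] using this
    have b2 : ∑ y, PY y * Real.log (S y / PY y) ≤ 0 := by
      have := gibbs_aux PY S hPYpos hSpos hSY
      simpa [Finset.sum_sub_distrib, hSsum, hPYsum] using this
    have := hsplit
    rw [Finset.sum_sub_distrib] at this
    linarith
  · exact le_top
  all_goals exact absurd hac0 (by assumption)
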